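/- For every deterministic online algorithm A for OOEBP (on instances with item sizes in (0,1]) and every real q < 2, there exists an instance I such that cost_A(I) > q·OPT(I). That is, the absolute competitive ratio of any online algorithm for OOEBP with 1-items is at least 2. -/

import Mathlib

/-
The adversary plays rounds `t = 0, 1, …, k - 1`, round `t` being the items `1 - γ_t, γ_t, 1`
with `γ_t = 2^t / 2^k`, and stops right after `γ_r`, where `r` is the first round in which the
algorithm does not put `γ_r` into the bin of `1 - γ_r` (or `r = k - 1` if there is none). In each
earlier round both bins the algorithm uses reach load `1` and are closed for good, so `1 - γ_r`
opens bin number `2r + 1`, and a split `γ_r` opens one more. Offline, each `1 - γ_j` (`j < r`)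
shares a bin with the `1`-item of its round, and all `γ_t` share one bin with `1 - γ_r`; this
works because `γ` is superincreasing, and uses `r + 1` bins. Hence the algorithm pays `2 · OPT`
after a split and `2k - 1` against `OPT ≤ k` otherwise.
-/

open scoped BigOperators Classical

namespace OOEBP

noncomputable section

/-- Load of bin `b` under packing `p` of instance `s`. -/
def binLoad (s : List ℝ) (p : ℕ → ℕ) (b : ℕ) : ℝ :=
  ∑ j ∈ Finset.range s.length, if p j = b then s.getD j 0 else 0

/-- A packing is feasible if each item is placed into a bin whose current
load (total size of earlier items in the same bin) is strictly below 1. -/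
def Feasible (s : List ℝ) (p : ℕ → ℕ) : Prop :=
  ∀ i < s.length,
    (∑ j ∈ Finset.range i, if p j = p i then s.getD j 0 else 0) < 1

/-- The cost of a packing: the number of nonempty bins. -/
def cost (s : List ℝ) (p : ℕ → ℕ) : ℕ :=
  ((Finset.range s.length).image p).card

/-- Optimal cost of a feasible packing of `s`. -/
def OPT (s : List ℝ) : ℕ :=
  sInf {m | ∃ p, Feasible s p ∧ cost s p = m}

/-- Item `i` is the exceeding item of its bin: the bin's total size is at
least 1 and `i` is the item of maximum index in its bin. -/
def IsExceeding (s : List ℝ) (p : ℕ → ℕ) (i : ℕ) : Prop :=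
  i < s.length ∧ 1 ≤ binLoad s p (p i) ∧
    ∀ j, i < j → j < s.length → p j ≠ p i

/-- The packing induced by a deterministic online algorithm `A`: item `i`
(0-based) is assigned to bin `A (s₁,…,s_{i+1})`. -/
def onlinePack (A : List ℝ → ℕ) (s : List ℝ) : ℕ → ℕ :=
  fun i => A (s.take (i + 1))

/-- An online algorithm is valid if the induced assignment is a feasible
packing on every instance with sizes in (0,1]. -/
def OnlineValid (A : List ℝ → ℕ) : Prop :=
  ∀ s : List ℝ, (∀ x ∈ s, 0 < x ∧ x ≤ 1) → Feasible s (onlinePack A s)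

/-- The number of bins used by the online algorithm `A` on instance `s`. -/
def onlineCost (A : List ℝ → ℕ) (s : List ℝ) : ℕ :=
  cost s (onlinePack A s)

def loadBefore (s : List ℝ) (p : ℕ → ℕ) (m b : ℕ) : ℝ :=
  ∑ j ∈ Finset.range m, if p j = b then s.getD j 0 else 0

def usedBins (p : ℕ → ℕ) (m : ℕ) : Finset ℕ :=
  (Finset.range m).image p

def AllBinsFull (s : List ℝ) (p : ℕ → ℕ) (m : ℕ) : Prop :=
  ∀ b ∈ usedBins p m, 1 ≤ loadBefore s p m b

section Packing

variable {s : List ℝ} {p : ℕ → ℕ} {m b : ℕ}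

lemma getD_nonneg (hs : ∀ x ∈ s, 0 ≤ x) (j : ℕ) : 0 ≤ s.getD j 0 := by
  rcases lt_or_ge j s.length with hj | hj
  · rw [List.getD_eq_getElem _ _ hj]
    exact hs _ (List.getElem_mem hj)
  · rw [List.getD_eq_default _ _ hj]

lemma loadBefore_zero : loadBefore s p 0 b = 0 := by
  simp [loadBefore]

lemma loadBefore_succ :
    loadBefore s p (m + 1) b = loadBefore s p m b + if p m = b then s.getD m 0 else 0 :=
  Finset.sum_range_succ _ _

lemma loadBefore_mono (hs : ∀ x ∈ s, 0 ≤ x) : Monotone (loadBefore s p · b) := by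
  refine monotone_nat_of_le_succ fun m => ?_
  simp only [loadBefore_succ]
  split_ifs
  · linarith [getD_nonneg hs m]
  · linarith

lemma loadBefore_nonneg (hs : ∀ x ∈ s, 0 ≤ x) : 0 ≤ loadBefore s p m b :=
  loadBefore_zero (s := s) (p := p) (b := b) ▸ loadBefore_mono hs (Nat.zero_le m)

lemma loadBefore_le_sum_of_subset (hs : ∀ x ∈ s, 0 ≤ x) {S : Finset ℕ}
    (hS : ∀ j < m, p j = b → j ∈ S) : loadBefore s p m b ≤ ∑ j ∈ S, s.getD j 0 := by
  rw [loadBefore, ← Finset.sum_filter]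
  refine Finset.sum_le_sum_of_subset_of_nonneg (fun j hj => ?_) fun j _ _ => getD_nonneg hs j
  rw [Finset.mem_filter, Finset.mem_range] at hj
  exact hS j hj.1 hj.2

lemma loadBefore_take {i : ℕ} (hi : i ≤ m) :
    loadBefore (s.take m) p i b = loadBefore s p i b := by
  refine Finset.sum_congr rfl fun j hj => ?_
  rw [Finset.mem_range] at hj
  simp only [List.getD_eq_getElem?_getD, List.getElem?_take, if_pos (hj.trans_le hi)]

lemma feasible_take (h : ∀ i < m, loadBefore s p i (p i) < 1) : Feasible (s.take m) p := by
  intro i hi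
  have him : i < m := (lt_min_iff.1 (List.length_take ▸ hi)).1
  show loadBefore (s.take m) p i (p i) < 1
  rw [loadBefore_take him.le]
  exact h i him

lemma OPT_le_cost (h : Feasible s p) : OPT s ≤ cost s p :=
  Nat.sInf_le ⟨p, h, rfl⟩

lemma cost_take (hm : m ≤ s.length) : cost (s.take m) p = (usedBins p m).card := by
  rw [cost, List.length_take, min_eq_left hm, usedBins]

lemma usedBins_zero : usedBins p 0 = ∅ := rfl

lemma usedBins_succ : usedBins p (m + 1) = insert (p m) (usedBins p m) := by
  rw [usedBins, Finset.range_add_one, Finset.image_insert, usedBins]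

lemma card_usedBins_succ (h : p m ∉ usedBins p m) :
    (usedBins p (m + 1)).card = (usedBins p m).card + 1 := by
  rw [usedBins_succ, Finset.card_insert_of_notMem h]

lemma Feasible.ne_of_one_le_loadBefore (hf : Feasible s p) (hs : ∀ x ∈ s, 0 ≤ x) {i : ℕ}
    (hi : i < s.length) (hmi : m ≤ i) (hb : 1 ≤ loadBefore s p m b) : p i ≠ b := by
  rintro rfl
  have : loadBefore s p i (p i) < 1 := hf i hi
  linarith [loadBefore_mono (p := p) (b := p i) hs hmi]

lemma Feasible.notMem_usedBins (hf : Feasible s p) (hs : ∀ x ∈ s, 0 ≤ x) (hm : m < s.length)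
    (hfull : AllBinsFull s p m) : p m ∉ usedBins p m :=
  fun hmem => hf.ne_of_one_le_loadBefore hs hm le_rfl (hfull _ hmem) rfl

lemma AllBinsFull.succ (hs : ∀ x ∈ s, 0 ≤ x) (hfull : AllBinsFull s p m)
    (hm : 1 ≤ s.getD m 0) : AllBinsFull s p (m + 1) := by
  intro b hb
  rw [usedBins_succ, Finset.mem_insert] at hb
  rcases hb with rfl | hb
  · rw [loadBefore_succ, if_pos rfl]
    linarith [loadBefore_nonneg (p := p) (m := m) (b := p m) hs]
  · exact (hfull b hb).trans (loadBefore_mono hs m.le_succ)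

lemma AllBinsFull.add_two (hs : ∀ x ∈ s, 0 ≤ x) (hfull : AllBinsFull s p m)
    (hpair : p (m + 1) = p m) (hm : 1 ≤ s.getD m 0 + s.getD (m + 1) 0) :
    AllBinsFull s p (m + 2) := by
  intro b hb
  rw [usedBins_succ, usedBins_succ, hpair, Finset.insert_idem, Finset.mem_insert] at hb
  rcases hb with rfl | hb
  · rw [loadBefore_succ, loadBefore_succ, if_pos rfl, if_pos hpair]
    linarith [loadBefore_nonneg (p := p) (m := m) (b := p m) hs]
  · exact (hfull b hb).trans (loadBefore_mono hs (by omega))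

end Packing

lemma onlinePack_take (A : List ℝ → ℕ) (s : List ℝ) {m i : ℕ} (hi : i < m) :
    onlinePack A (s.take m) i = onlinePack A s i := by
  rw [onlinePack, onlinePack, List.take_take, min_eq_left (by omega)]

lemma onlineCost_take (A : List ℝ → ℕ) {s : List ℝ} {m : ℕ} (hm : m ≤ s.length) :
    onlineCost A (s.take m) = (usedBins (onlinePack A s) m).card := by
  rw [onlineCost, cost_take hm, usedBins, usedBins]
  exact congrArg Finset.card
    (Finset.image_congr fun i hi => onlinePack_take A s (Finset.mem_range.1 hi))

def smallSize (k t : ℕ) : ℝ := 2 ^ t / 2 ^ k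

/- Round `t` consists of the items `3t, 3t+1, 3t+2`, of sizes `1 - γ_t, γ_t, 1`, where
`γ_t = smallSize k t`. -/
def itemSize (k i : ℕ) : ℝ :=
  if i % 3 = 0 then 1 - smallSize k (i / 3) else if i % 3 = 1 then smallSize k (i / 3) else 1

def adversarySeq (k : ℕ) : List ℝ := (List.range (3 * k)).map (itemSize k)

section Adversary

variable {k : ℕ}

lemma smallSize_pos (t : ℕ) : 0 < smallSize k t := by
  unfold smallSize
  positivity

lemma smallSize_lt_one {t : ℕ} (ht : t < k) : smallSize k t < 1 := by
  rw [smallSize, div_lt_one (by positivity)]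
  exact pow_lt_pow_right₀ one_lt_two ht

lemma sum_smallSize (r : ℕ) : ∑ t ∈ Finset.range r, smallSize k t = (2 ^ r - 1) / 2 ^ k := by
  simp only [smallSize]
  rw [← Finset.sum_div, geom_sum_eq (by norm_num : (2 : ℝ) ≠ 1)]
  norm_num

lemma itemSize_three_mul (t : ℕ) : itemSize k (3 * t) = 1 - smallSize k t := by
  rw [itemSize, if_pos (by omega), Nat.mul_div_cancel_left t (by norm_num)]

lemma itemSize_three_mul_add_one (t : ℕ) : itemSize k (3 * t + 1) = smallSize k t := by
  rw [itemSize, if_neg (by omega), if_pos (by omega), show (3 * t + 1) / 3 = t by omega]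

lemma itemSize_three_mul_add_two (t : ℕ) : itemSize k (3 * t + 2) = 1 := by
  rw [itemSize, if_neg (by omega), if_neg (by omega)]

lemma itemSize_mem_Ioc {i : ℕ} (hi : i < 3 * k) : 0 < itemSize k i ∧ itemSize k i ≤ 1 := by
  have h0 := smallSize_pos (k := k) (i / 3)
  have h1 := smallSize_lt_one (show i / 3 < k by omega)
  unfold itemSize
  split_ifs <;> constructor <;> linarith

lemma length_adversarySeq : (adversarySeq k).length = 3 * k := by
  simp [adversarySeq]

lemma getD_adversarySeq {i : ℕ} (hi : i < 3 * k) : (adversarySeq k).getD i 0 = itemSize k i := by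
  simp [adversarySeq, List.getD_eq_getElem?_getD, hi]

lemma adversarySeq_mem_Ioc : ∀ x ∈ adversarySeq k, 0 < x ∧ x ≤ 1 := by
  simp only [adversarySeq, List.mem_map, List.mem_range]
  rintro _ ⟨i, hi, rfl⟩
  exact itemSize_mem_Ioc hi

lemma adversarySeq_nonneg : ∀ x ∈ adversarySeq k, 0 ≤ x :=
  fun x hx => (adversarySeq_mem_Ioc x hx).1.le

end Adversary

/- Packing of the first `r` rounds and the first two items of round `r` into `r + 1` bins: bin
`j < r` takes `1 - γ_j` and the `1`-item of round `j`, bin `r` takes every `γ_t` and `1 - γ_r`.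
Bin `r` stays below `1` before its last item because `∑_{t<r} γ_t = γ_r - 2⁻ᵏ`. -/
def optPacking (r i : ℕ) : ℕ := if i % 3 = 1 ∨ 3 * r ≤ i then r else i / 3

section Offline

variable {k r : ℕ}

lemma loadBefore_optPacking_lt_one (hr : r < k) {i : ℕ} (hi : i < 3 * r + 2) :
    loadBefore (adversarySeq k) (optPacking r) i (optPacking r i) < 1 := by
  by_cases hbin : i % 3 = 1 ∨ 3 * r ≤ i
  · rw [optPacking, if_pos hbin]
    calc loadBefore (adversarySeq k) (optPacking r) i r
        ≤ ∑ j ∈ insert (3 * r) ((Finset.range r).image (3 * · + 1)),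
            (adversarySeq k).getD j 0 := by
          refine loadBefore_le_sum_of_subset adversarySeq_nonneg fun j hj hpj => ?_
          simp only [optPacking, Finset.mem_insert, Finset.mem_image, Finset.mem_range] at hpj ⊢
          split_ifs at hpj with hc
          · rcases hc with hc | hc
            · exact Or.inr ⟨j / 3, by omega, by omega⟩
            · exact Or.inl (by omega)
          · omega
      _ = 1 - 1 / 2 ^ k := by
          rw [Finset.sum_insert (by simp only [Finset.mem_image]; omega),
            Finset.sum_image (by intro a _ b _ h; simp only at h; omega),
            getD_adversarySeq (by omega), itemSize_three_mul,
            Finset.sum_congr rfl fun t ht => by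
              rw [getD_adversarySeq (by simp only [Finset.mem_range] at ht; omega),
                itemSize_three_mul_add_one],
            sum_smallSize, smallSize]
          field_simp
          ring
      _ < 1 := by linarith [show (0 : ℝ) < 1 / 2 ^ k by positivity]
  · rw [optPacking, if_neg hbin]
    calc loadBefore (adversarySeq k) (optPacking r) i (i / 3)
        ≤ ∑ j ∈ {3 * (i / 3)}, (adversarySeq k).getD j 0 := by
          refine loadBefore_le_sum_of_subset adversarySeq_nonneg fun j hj hpj => ?_
          simp only [optPacking, Finset.mem_singleton] at hpj ⊢
          split_ifs at hpj <;> omega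
      _ = 1 - smallSize k (i / 3) := by
          rw [Finset.sum_singleton, getD_adversarySeq (by omega), itemSize_three_mul]
      _ < 1 := by linarith [smallSize_pos (k := k) (i / 3)]

lemma OPT_take_adversarySeq_le (hr : r < k) :
    OPT ((adversarySeq k).take (3 * r + 2)) ≤ r + 1 := by
  refine (OPT_le_cost (feasible_take fun i hi => loadBefore_optPacking_lt_one hr hi)).trans ?_
  rw [cost_take (by rw [length_adversarySeq]; omega), ← Finset.card_range (r + 1)]
  refine Finset.card_le_card fun b hb => ?_
  simp only [usedBins, optPacking, Finset.mem_image, Finset.mem_range] at hb ⊢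
  obtain ⟨j, hj, rfl⟩ := hb
  split_ifs <;> omega

end Offline

section AdversaryPacking

variable {k r : ℕ} {p : ℕ → ℕ}

lemma allBinsFull_and_card_usedBins (hf : Feasible (adversarySeq k) p) (hr : r ≤ k)
    (hfollow : ∀ j < r, p (3 * j + 1) = p (3 * j)) :
    AllBinsFull (adversarySeq k) p (3 * r) ∧ (usedBins p (3 * r)).card = 2 * r := by
  induction r with
  | zero => exact ⟨fun b hb => by simp [usedBins_zero] at hb, rfl⟩
  | succ r ih =>
    obtain ⟨hfull, hcard⟩ := ih (by omega) fun j hj => hfollow j (by omega)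
    have hlen : 3 * r + 2 < (adversarySeq k).length := by rw [length_adversarySeq]; omega
    have hnew₀ := hf.notMem_usedBins adversarySeq_nonneg (by omega) hfull
    have hfull₂ : AllBinsFull (adversarySeq k) p (3 * r + 2) := by
      refine hfull.add_two adversarySeq_nonneg (hfollow r (by omega)) ?_
      rw [getD_adversarySeq (by omega), getD_adversarySeq (by omega), itemSize_three_mul,
        itemSize_three_mul_add_one, sub_add_cancel]
    have hnew₂ := hf.notMem_usedBins adversarySeq_nonneg hlen hfull₂
    have hused₂ : usedBins p (3 * r + 2) = usedBins p (3 * r + 1) := by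
      rw [usedBins_succ, hfollow r (by omega), Finset.insert_eq_of_mem
        (by rw [usedBins_succ]; exact Finset.mem_insert_self _ _)]
    rw [show 3 * (r + 1) = 3 * r + 2 + 1 by ring]
    refine ⟨hfull₂.succ adversarySeq_nonneg ?_, ?_⟩
    · rw [getD_adversarySeq (by omega), itemSize_three_mul_add_two]
    · rw [card_usedBins_succ hnew₂, hused₂, card_usedBins_succ hnew₀, hcard, mul_add_one]

lemma card_usedBins_three_mul_add_two (hf : Feasible (adversarySeq k) p) (hr : r < k)
    (hfollow : ∀ j < r, p (3 * j + 1) = p (3 * j)) :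
    2 * r + 1 ≤ (usedBins p (3 * r + 2)).card ∧
      (p (3 * r + 1) ≠ p (3 * r) → 2 * r + 2 ≤ (usedBins p (3 * r + 2)).card) := by
  obtain ⟨hfull, hcard⟩ := allBinsFull_and_card_usedBins hf hr.le hfollow
  have hlen : 3 * r + 1 < (adversarySeq k).length := by rw [length_adversarySeq]; omega
  have hcard₁ : (usedBins p (3 * r + 1)).card = 2 * r + 1 := by
    rw [card_usedBins_succ (hf.notMem_usedBins adversarySeq_nonneg (by omega) hfull), hcard]
  refine ⟨?_, fun hdev => ?_⟩
  · rw [← hcard₁, usedBins_succ (m := 3 * r + 1)]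
    exact Finset.card_le_card (Finset.subset_insert _ _)
  · have hnew : p (3 * r + 1) ∉ usedBins p (3 * r + 1) := by
      rw [usedBins_succ, Finset.mem_insert, not_or]
      exact ⟨hdev, fun hmem => hf.ne_of_one_le_loadBefore adversarySeq_nonneg hlen
        (Nat.le_succ _) (hfull _ hmem) rfl⟩
    rw [card_usedBins_succ hnew, hcard₁]

end AdversaryPacking

lemma exists_round_le_onlineCost {A : List ℝ → ℕ} {k : ℕ} (hA : OnlineValid A)
    (hk : 0 < k) :
    ∃ r < k, 2 * r + 2 ≤ onlineCost A ((adversarySeq k).take (3 * r + 2)) ∨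
      (r + 1 = k ∧ 2 * r + 1 ≤ onlineCost A ((adversarySeq k).take (3 * r + 2))) := by
  set p := onlinePack A (adversarySeq k)
  have hf : Feasible (adversarySeq k) p := hA _ adversarySeq_mem_Ioc
  have hcost (r : ℕ) (hr : r < k) :
      onlineCost A ((adversarySeq k).take (3 * r + 2)) = (usedBins p (3 * r + 2)).card :=
    onlineCost_take A (by rw [length_adversarySeq]; omega)
  by_cases hdev : ∃ r < k, p (3 * r + 1) ≠ p (3 * r)
  · obtain ⟨hr, hrdev⟩ := Nat.find_spec hdev
    have hfollow : ∀ j < Nat.find hdev, p (3 * j + 1) = p (3 * j) := fun j hj => by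
      simpa [hr.trans' hj] using Nat.find_min hdev hj
    refine ⟨Nat.find hdev, hr, Or.inl ?_⟩
    rw [hcost _ hr]
    exact (card_usedBins_three_mul_add_two hf hr hfollow).2 hrdev
  · push Not at hdev
    refine ⟨k - 1, by omega, Or.inr ⟨by omega, ?_⟩⟩
    rw [hcost _ (by omega)]
    exact (card_usedBins_three_mul_add_two hf (by omega) fun j hj => hdev j (by omega)).1

theorem stmt4 (A : List ℝ → ℕ) (hA : OnlineValid A) (q : ℝ) (hq : q < 2) :
    ∃ s : List ℝ, (∀ x ∈ s, 0 < x ∧ x ≤ 1) ∧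
      (onlineCost A s : ℝ) > q * OPT s := by
  set q₀ := max q 0
  have hq₀ : q₀ < 2 := max_lt hq two_pos
  obtain ⟨k, hkq⟩ := exists_nat_gt (1 / (2 - q₀))
  have hk : 1 < (2 - q₀) * k := by rwa [div_lt_iff₀' (by linarith)] at hkq
  obtain ⟨r, hr, hcost⟩ :=
    exists_round_le_onlineCost hA (k := k) (Nat.pos_of_ne_zero (by rintro rfl; norm_num at hk))
  set s := (adversarySeq k).take (3 * r + 2)
  refine ⟨s, fun x hx => adversarySeq_mem_Ioc x (List.mem_of_mem_take hx), ?_⟩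
  have hopt : (OPT s : ℝ) ≤ r + 1 := by exact_mod_cast OPT_take_adversarySeq_le hr
  have hqOPT : q * OPT s ≤ q₀ * (r + 1) :=
    (mul_le_mul_of_nonneg_right (le_max_left q 0) (Nat.cast_nonneg _)).trans
      (mul_le_mul_of_nonneg_left hopt (le_max_right q 0))
  rcases hcost with hcost | ⟨hrk, hcost⟩
  · have hcost : (2 * r + 2 : ℝ) ≤ onlineCost A s := by exact_mod_cast hcost
    nlinarith
  · have hcost : (2 * r + 1 : ℝ) ≤ onlineCost A s := by exact_mod_cast hcost
    have hrk : (r + 1 : ℝ) = k := by exact_mod_cast hrk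
    nlinarith

end

end OOEBP
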